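/- The ratio of weighted to unweighted partition functions for f = w1^2 w2^4 satisfies lim_{n→∞} Z₁(n)/Z(n) = √2·Γ(3/4)/Γ(1/4), a nonzero constant independent of n. Consequently the leading asymptotic acceptance rate U₁ = (4√2/σ)·Z₁/Z tends to (8/σ)·Γ(3/4)/Γ(1/4). -/

import Mathlib

/-!
With weight `|w1| ^ k`, integrating out `w1` is a Gaussian moment computation:
`Z_k(n) = (2π)⁻¹ Γ((k+1)/2) ∫ exp(-w²/2) (1/2 + n w⁴)^(-(k+1)/2) dw`.
The substitution `w = n^(-1/4) t` turns this into
`n^(-1/4) (2π)⁻¹ Γ((k+1)/2) ∫ exp(-t²/(2√n)) (1/2 + t⁴)^(-(k+1)/2) dt`, and by dominated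
convergence the last integral tends to `∫ (1/2 + t⁴)^(-(k+1)/2) dt`. Writing
`(c + t⁴)^(-p) = Γ(p)⁻¹ ∫₀^∞ s^(p-1) exp(-(c + t⁴) s) ds` and swapping the integrals evaluates it
as `2 Γ(5/4) Γ(p - 1/4) c^(1/4-p) / Γ(p)`. So `n^(1/4) Z_k(n)` converges to a constant
proportional to `Γ(k/2 + 1/4) 2^(k/2 + 1/4)`, and the ratio of the limits for `k = 1` and `k = 0`
is `√2 Γ(3/4) / Γ(1/4)`.
-/

open Real MeasureTheory Filter

/-- Partition function for `f(w1,w2) = w1^2 w2^4`. -/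
noncomputable def Zb (n : ℝ) : ℝ :=
  ∫ w1 : ℝ, ∫ w2 : ℝ,
    Real.exp (-(n * (w1 ^ 2 * w2 ^ 4))) *
      (1 / (2 * π) * Real.exp (-(w1 ^ 2 + w2 ^ 2) / 2))

/-- Weighted partition function with weight `|w1|` for `f(w1,w2) = w1^2 w2^4`. -/
noncomputable def Z1b (n : ℝ) : ℝ :=
  ∫ w1 : ℝ, ∫ w2 : ℝ,
    |w1| * Real.exp (-(n * (w1 ^ 2 * w2 ^ 4))) *
      (1 / (2 * π) * Real.exp (-(w1 ^ 2 + w2 ^ 2) / 2))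

open Set Topology

theorem integral_abs_rpow_mul_exp_neg_mul_sq {k b : ℝ} (hk : -1 < k) (hb : 0 < b) :
    ∫ x, |x| ^ k * exp (-(b * x ^ 2)) = Gamma ((k + 1) / 2) * b ^ (-((k + 1) / 2)) := by
  have hsymm : ∫ x, |x| ^ k * exp (-(b * x ^ 2))
      = 2 * ∫ x in Ioi (0 : ℝ), x ^ k * exp (-b * x ^ (2 : ℝ)) := by
    simp_rw [← integral_comp_abs (f := fun x => x ^ k * exp (-b * x ^ (2 : ℝ))), rpow_two, sq_abs,
      neg_mul]
  rw [hsymm, integral_rpow_mul_exp_neg_mul_rpow two_pos hk hb, neg_div]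
  ring

theorem integrable_abs_rpow_mul_exp_neg_mul_sq {k b : ℝ} (hk : -1 < k) (hb : 0 < b) :
    Integrable fun x : ℝ => |x| ^ k * exp (-(b * x ^ 2)) :=
  .of_integral_ne_zero (by
    rw [integral_abs_rpow_mul_exp_neg_mul_sq hk hb]
    have := Gamma_pos_of_pos (by linarith : 0 < (k + 1) / 2)
    positivity)

theorem integral_exp_neg_mul_pow_four {b : ℝ} (hb : 0 < b) :
    ∫ x, exp (-(b * x ^ 4)) = 2 * Gamma (5 / 4) * b ^ (-(1 / 4) : ℝ) := by
  have hsymm : ∫ x, exp (-(b * x ^ 4)) = 2 * ∫ x in Ioi (0 : ℝ), exp (-b * x ^ (4 : ℝ)) := by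
    rw [← integral_comp_abs (f := fun x => exp (-b * x ^ (4 : ℝ)))]
    congr 1 with x
    rw [show (4 : ℝ) = (4 : ℕ) by norm_num, rpow_natCast, pow_abs, abs_of_nonneg (by positivity),
      neg_mul]
  rw [hsymm, integral_exp_neg_mul_rpow (by norm_num) hb]
  norm_num
  ring

section AddPowFour

variable {c p : ℝ}

theorem integral_rpow_mul_exp_neg_mul_add_pow_four {s : ℝ} (hs : 0 < s) :
    ∫ t, s ^ (p - 1) * exp (-((c + t ^ 4) * s))
      = 2 * Gamma (5 / 4) * (s ^ (p - 1 / 4 - 1) * exp (-(c * s))) := by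
  have hsplit : ∀ t : ℝ, s ^ (p - 1) * exp (-((c + t ^ 4) * s))
      = s ^ (p - 1) * exp (-(c * s)) * exp (-(s * t ^ 4)) := fun t => by
    rw [mul_assoc, ← exp_add]; ring_nf
  simp_rw [hsplit, integral_const_mul, integral_exp_neg_mul_pow_four hs,
    show p - 1 / 4 - 1 = (p - 1) + -(1 / 4) by ring, rpow_add hs]
  ring

theorem integrable_rpow_mul_exp_neg_mul_add_pow_four (hc : 0 < c) (hp : 1 / 4 < p) :
    Integrable (Function.uncurry fun t s => s ^ (p - 1) * exp (-((c + t ^ 4) * s)))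
      (volume.prod (volume.restrict (Ioi 0))) := by
  have hmeas : Measurable
      (Function.uncurry fun t s : ℝ => s ^ (p - 1) * exp (-((c + t ^ 4) * s))) := by
    fun_prop
  refine (integrable_prod_iff' hmeas.aestronglyMeasurable).2 ⟨?_, ?_⟩
  · filter_upwards [ae_restrict_mem measurableSet_Ioi] with s (hs : 0 < s)
    refine .of_integral_ne_zero ?_
    simp only [Function.uncurry_apply_pair]
    rw [integral_rpow_mul_exp_neg_mul_add_pow_four hs]
    positivity
  · have hGamma : IntegrableOn (fun s => s ^ (p - 1 / 4 - 1) * exp (-(c * s))) (Ioi 0) :=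
      .of_integral_ne_zero (by
        rw [integral_rpow_mul_exp_neg_mul_Ioi (by linarith) hc]
        have := Gamma_pos_of_pos (by linarith : 0 < p - 1 / 4)
        positivity)
    refine (hGamma.const_mul (2 * Gamma (5 / 4))).congr ?_
    filter_upwards [ae_restrict_mem measurableSet_Ioi] with s (hs : 0 < s)
    have hnonneg (t : ℝ) : 0 ≤ s ^ (p - 1) * exp (-((c + t ^ 4) * s)) := by positivity
    simp only [Function.uncurry_apply_pair, norm_of_nonneg (hnonneg _),
      integral_rpow_mul_exp_neg_mul_add_pow_four hs]

theorem integral_add_pow_four_rpow_neg (hc : 0 < c) (hp : 1 / 4 < p) :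
    ∫ t, (c + t ^ 4) ^ (-p)
      = 2 * Gamma (5 / 4) * Gamma (p - 1 / 4) * (1 / c) ^ (p - 1 / 4) / Gamma p := by
  have hp0 : 0 < p := by linarith
  have hΓ : Gamma p ≠ 0 := (Gamma_pos_of_pos hp0).ne'
  have hmellin (t : ℝ) : ∫ s in Ioi (0 : ℝ), s ^ (p - 1) * exp (-((c + t ^ 4) * s))
      = Gamma p * (c + t ^ 4) ^ (-p) := by
    have hct : 0 < c + t ^ 4 := by positivity
    rw [integral_rpow_mul_exp_neg_mul_Ioi hp0 hct, one_div, inv_rpow hct.le, rpow_neg hct.le,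
      mul_comm]
  calc ∫ t, (c + t ^ 4) ^ (-p)
      = (Gamma p)⁻¹ * ∫ t, ∫ s in Ioi (0 : ℝ), s ^ (p - 1) * exp (-((c + t ^ 4) * s)) := by
        simp_rw [hmellin, integral_const_mul, inv_mul_cancel_left₀ hΓ]
    _ = (Gamma p)⁻¹ * ∫ s in Ioi (0 : ℝ), ∫ t, s ^ (p - 1) * exp (-((c + t ^ 4) * s)) := by
        rw [integral_integral_swap (integrable_rpow_mul_exp_neg_mul_add_pow_four hc hp)]
    _ = (Gamma p)⁻¹ *
          (2 * Gamma (5 / 4) * ∫ s in Ioi (0 : ℝ), s ^ (p - 1 / 4 - 1) * exp (-(c * s))) := by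
        rw [setIntegral_congr_fun measurableSet_Ioi
          fun s hs => integral_rpow_mul_exp_neg_mul_add_pow_four (c := c) (p := p) hs,
          integral_const_mul]
    _ = _ := by
        rw [integral_rpow_mul_exp_neg_mul_Ioi (by linarith) hc]
        field_simp

theorem integrable_add_pow_four_rpow_neg (hc : 0 < c) (hp : 1 / 4 < p) :
    Integrable fun t : ℝ => (c + t ^ 4) ^ (-p) := by
  refine .of_integral_ne_zero ?_
  rw [integral_add_pow_four_rpow_neg hc hp]
  have := Gamma_pos_of_pos (by linarith : 0 < p - 1 / 4)
  have := Gamma_pos_of_pos (by linarith : 0 < p)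
  positivity

end AddPowFour

theorem tendsto_integral_exp_neg_mul_sq_mul {g : ℝ → ℝ} (hg : Integrable g) :
    Tendsto (fun ε => ∫ t, exp (-(ε * t ^ 2)) * g t) (𝓝[≥] 0) (𝓝 (∫ t, g t)) := by
  refine tendsto_integral_filter_of_dominated_convergence (fun t => ‖g t‖)
    (.of_forall fun ε =>
      (by fun_prop : Continuous fun t => exp (-(ε * t ^ 2))).aestronglyMeasurable.mul hg.1)
    ?_ hg.norm (.of_forall fun t => ?_)
  · filter_upwards [self_mem_nhdsWithin] with ε (hε : 0 ≤ ε)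
    refine .of_forall fun t => ?_
    rw [norm_mul, norm_of_nonneg (exp_pos _).le]
    exact mul_le_of_le_one_left (norm_nonneg _) (exp_le_one_iff.2 (by nlinarith [sq_nonneg t]))
  · refine tendsto_nhdsWithin_of_tendsto_nhds ?_
    simpa using ((by fun_prop : Continuous fun ε : ℝ => exp (-(ε * t ^ 2)) * g t).tendsto 0)

theorem tendsto_inv_two_mul_sqrt_atTop : Tendsto (fun n : ℝ => (2 * √n)⁻¹) atTop (𝓝[≥] 0) :=
  tendsto_nhdsWithin_iff.2 ⟨(tendsto_sqrt_atTop.const_mul_atTop two_pos).inv_tendsto_atTop,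
    .of_forall fun _ => mem_Ici.2 (by positivity)⟩

noncomputable def absMomentZ (k n : ℝ) : ℝ :=
  ∫ w1 : ℝ, ∫ w2 : ℝ,
    |w1| ^ k * exp (-(n * (w1 ^ 2 * w2 ^ 4))) * (1 / (2 * π) * exp (-(w1 ^ 2 + w2 ^ 2) / 2))

theorem Zb_eq_absMomentZ : Zb = absMomentZ 0 := by
  ext n; simp only [Zb, absMomentZ, rpow_zero, one_mul]

theorem Z1b_eq_absMomentZ : Z1b = absMomentZ 1 := by
  ext n; simp only [Z1b, absMomentZ, rpow_one]

section AbsMomentZ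

variable {k n : ℝ}

theorem integrable_absMomentZ_integrand (hk : -1 < k) (hn : 0 ≤ n) :
    Integrable (Function.uncurry fun w1 w2 : ℝ =>
      |w1| ^ k * exp (-(n * (w1 ^ 2 * w2 ^ 4))) * (1 / (2 * π) * exp (-(w1 ^ 2 + w2 ^ 2) / 2)))
      (volume.prod volume) := by
  have hbound : Integrable (fun z : ℝ × ℝ =>
      (1 / (2 * π)) * (|z.1| ^ k * exp (-(2⁻¹ * z.1 ^ 2)) * exp (-2⁻¹ * z.2 ^ 2)))
      (volume.prod volume) :=
    ((integrable_abs_rpow_mul_exp_neg_mul_sq hk (by norm_num)).mul_prod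
      (integrable_exp_neg_mul_sq (by norm_num))).const_mul _
  refine hbound.mono' (by fun_prop : Measurable _).aestronglyMeasurable
    (.of_forall fun ⟨w1, w2⟩ => ?_)
  have hsplit : exp (-(w1 ^ 2 + w2 ^ 2) / 2) = exp (-(2⁻¹ * w1 ^ 2)) * exp (-2⁻¹ * w2 ^ 2) := by
    rw [← exp_add]; ring_nf
  have hdecay : exp (-(n * (w1 ^ 2 * w2 ^ 4))) ≤ 1 := exp_le_one_iff.2 (by
    have : 0 ≤ n * (w1 ^ 2 * w2 ^ 4) := by positivity
    linarith)
  simp only [Function.uncurry_apply_pair]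
  rw [norm_of_nonneg (by positivity), hsplit]
  calc |w1| ^ k * exp (-(n * (w1 ^ 2 * w2 ^ 4)))
        * (1 / (2 * π) * (exp (-(2⁻¹ * w1 ^ 2)) * exp (-2⁻¹ * w2 ^ 2)))
      ≤ |w1| ^ k * 1 * (1 / (2 * π) * (exp (-(2⁻¹ * w1 ^ 2)) * exp (-2⁻¹ * w2 ^ 2))) := by
        gcongr
    _ = _ := by ring

theorem absMomentZ_eq_integral (hk : -1 < k) (hn : 0 ≤ n) :
    absMomentZ k n = (2 * π)⁻¹ * Gamma ((k + 1) / 2) *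
      ∫ w, exp (-(2⁻¹ * w ^ 2)) * (1 / 2 + n * w ^ 4) ^ (-((k + 1) / 2)) := by
  rw [absMomentZ, integral_integral_swap (integrable_absMomentZ_integrand hk hn),
    ← integral_const_mul]
  congr 1 with w2
  have hsplit (w1 : ℝ) : |w1| ^ k * exp (-(n * (w1 ^ 2 * w2 ^ 4)))
        * (1 / (2 * π) * exp (-(w1 ^ 2 + w2 ^ 2) / 2))
      = (2 * π)⁻¹ * exp (-(2⁻¹ * w2 ^ 2))
          * (|w1| ^ k * exp (-((1 / 2 + n * w2 ^ 4) * w1 ^ 2))) := by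
    have hexp : exp (-(n * (w1 ^ 2 * w2 ^ 4))) * exp (-(w1 ^ 2 + w2 ^ 2) / 2)
        = exp (-(2⁻¹ * w2 ^ 2)) * exp (-((1 / 2 + n * w2 ^ 4) * w1 ^ 2)) := by
      rw [← exp_add, ← exp_add]; ring_nf
    linear_combination (|w1| ^ k * (2 * π)⁻¹) * hexp
  simp_rw [hsplit, integral_const_mul,
    integral_abs_rpow_mul_exp_neg_mul_sq hk (by positivity : 0 < 1 / 2 + n * w2 ^ 4)]
  ring

theorem rpow_mul_absMomentZ (hk : -1 < k) (hn : 0 < n) :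
    n ^ (1 / 4 : ℝ) * absMomentZ k n = (2 * π)⁻¹ * Gamma ((k + 1) / 2) *
      ∫ t, exp (-((2 * √n)⁻¹ * t ^ 2)) * (1 / 2 + t ^ 4) ^ (-((k + 1) / 2)) := by
  set c := n ^ (1 / 4 : ℝ)
  have hc : 0 < c := by positivity
  have hc2 : c ^ 2 = √n := by
    rw [← rpow_natCast, ← rpow_mul hn.le, sqrt_eq_rpow]; norm_num
  have hc4 : c ^ 4 = n := by
    rw [← rpow_natCast, ← rpow_mul hn.le]; norm_num
  have hsubst (t : ℝ) :
      exp (-(2⁻¹ * (t / c) ^ 2)) * (1 / 2 + n * (t / c) ^ 4) ^ (-((k + 1) / 2))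
        = exp (-((2 * √n)⁻¹ * t ^ 2)) * (1 / 2 + t ^ 4) ^ (-((k + 1) / 2)) := by
    rw [div_pow, div_pow, hc2, hc4]
    field_simp
  rw [absMomentZ_eq_integral hk hn.le, ← funext hsubst,
    Measure.integral_comp_div
      (fun w => exp (-(2⁻¹ * w ^ 2)) * (1 / 2 + n * w ^ 4) ^ (-((k + 1) / 2))),
    abs_of_pos hc, smul_eq_mul]
  ring

theorem tendsto_rpow_mul_absMomentZ (hk : -1 / 2 < k) :
    Tendsto (fun n => n ^ (1 / 4 : ℝ) * absMomentZ k n) atTop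
      (𝓝 (Gamma (5 / 4) * Gamma ((2 * k + 1) / 4) * 2 ^ ((2 * k + 1) / 4) / π)) := by
  have hp : 1 / 4 < (k + 1) / 2 := by linarith
  have hlim := ((tendsto_integral_exp_neg_mul_sq_mul (integrable_add_pow_four_rpow_neg
    (by norm_num : (0 : ℝ) < 1 / 2) hp)).comp tendsto_inv_two_mul_sqrt_atTop).const_mul
    ((2 * π)⁻¹ * Gamma ((k + 1) / 2))
  have hvalue : (2 * π)⁻¹ * Gamma ((k + 1) / 2) * ∫ t, (1 / 2 + t ^ 4) ^ (-((k + 1) / 2))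
      = Gamma (5 / 4) * Gamma ((2 * k + 1) / 4) * 2 ^ ((2 * k + 1) / 4) / π := by
    have := Gamma_pos_of_pos (by linarith : 0 < (k + 1) / 2)
    rw [integral_add_pow_four_rpow_neg (by norm_num) hp,
      show (k + 1) / 2 - 1 / 4 = (2 * k + 1) / 4 by ring, one_div_one_div]
    field_simp
  rw [← hvalue]
  refine hlim.congr' ?_
  filter_upwards [eventually_gt_atTop 0] with n hn
  rw [Function.comp_apply, rpow_mul_absMomentZ (by linarith) hn]

end AbsMomentZ

theorem ratio_Z1b_Zb :
    Tendsto (fun n : ℝ => Z1b n / Zb n) atTop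
      (nhds (Real.sqrt 2 * Real.Gamma (3/4) / Real.Gamma (1/4))) ∧
    ∀ σ : ℝ, σ > 0 →
      Tendsto (fun n : ℝ => 4 * Real.sqrt 2 / σ * (Z1b n / Zb n)) atTop
        (nhds (8 / σ * Real.Gamma (3/4) / Real.Gamma (1/4))) := by
  have hZ := tendsto_rpow_mul_absMomentZ (k := 0) (by norm_num)
  have hZ1 := tendsto_rpow_mul_absMomentZ (k := 1) (by norm_num)
  norm_num at hZ hZ1
  have hlim : Gamma (5 / 4) * Gamma (3 / 4) * 2 ^ (3 / 4 : ℝ) / π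
      / (Gamma (5 / 4) * Gamma (1 / 4) * 2 ^ (1 / 4 : ℝ) / π)
      = √2 * Gamma (3 / 4) / Gamma (1 / 4) := by
    have h34 : (2 : ℝ) ^ (3 / 4 : ℝ) = 2 ^ (1 / 4 : ℝ) * √2 := by
      rw [sqrt_eq_rpow, ← rpow_add two_pos]; norm_num
    have := Gamma_pos_of_pos (by norm_num : (0 : ℝ) < 5 / 4)
    have := Gamma_pos_of_pos (by norm_num : (0 : ℝ) < 1 / 4)
    rw [h34]; field_simp
  have hratio : Tendsto (fun n : ℝ => Z1b n / Zb n) atTop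
      (𝓝 (√2 * Gamma (3 / 4) / Gamma (1 / 4))) := by
    rw [← hlim]
    refine (hZ1.div hZ (by positivity)).congr' ?_
    filter_upwards [eventually_gt_atTop 0] with n hn
    rw [Zb_eq_absMomentZ, Z1b_eq_absMomentZ, Pi.div_apply,
      mul_div_mul_left _ _ (by positivity)]
  refine ⟨hratio, fun σ hσ => ?_⟩
  convert hratio.const_mul (4 * √2 / σ) using 2
  field_simp
  linear_combination (-4) * Real.sq_sqrt (by norm_num : (0 : ℝ) ≤ 2)
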